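/- For t ≤ 0 and any n ≥ 1, ζ(2(t+β))^n ≤ ∑_{ω∈ℕ^n} q_n(ω)^{−2t} ∏_{i=1}^n ω_i^{−2β} ≤ 2^{−2nt} ζ(2(t+β))^n, where the middle sum may be infinite and ζ is the Riemann zeta function (with ζ(s) = +∞ for s ≤ 1). -/

import Mathlib

/-!
The recurrence `q_{k+1} = ω_{k+1} q_k + q_{k-1}` with `q_{k-1} ≤ q_k` gives
`∏ ω_i ≤ q_n(ω) ≤ 2ⁿ ∏ ω_i`. As `t ≤ 0`, the weight `q^{-2t}` is monotone in `q`, so each term of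
the partition function lies between `∏ ω_i^{-2(t+β)}` and `2^{-2nt}` times it, and the sum of
`∏ ω_i^{-2(t+β)}` over `ℕⁿ` factorizes as `ζ(2(t+β))ⁿ`.
-/

open Filter ENNReal

/-- Denominators of the convergents: `q_n = ω_n q_{n-1} + q_{n-2}`, `q_{-1} = 0`, `q_0 = 1`. -/
def qRec (a : ℕ → ℕ) : ℕ → ℕ
  | 0 => 1
  | 1 => a 1
  | n + 2 => a (n + 2) * qRec a (n + 1) + qRec a n

/-- The continued fraction denominator `q_n(ω)` of a finite word `ω ∈ ℕ^n`. -/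
def wordQ {n : ℕ} (w : Fin n → ℕ+) : ℕ :=
  qRec (fun i => if h : 1 ≤ i ∧ i ≤ n then (w ⟨i - 1, by omega⟩ : ℕ) else 1) n

/-- The `n`-th partition function `Z_n(t,β) = ∑_{ω ∈ ℕ^n} q_n(ω)^{−2t} ∏ ω_i^{−2β}`,
valued in `[0,∞]`. -/
noncomputable def Zpart (t β : ℝ) (n : ℕ) : ℝ≥0∞ :=
  ∑' w : Fin n → ℕ+,
    ((wordQ w : ℝ≥0∞)) ^ (-2 * t) * ∏ i : Fin n, (((w i : ℕ) : ℝ≥0∞)) ^ (-2 * β)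

/-- The zeta series `∑_{k≥1} k^{−s}` valued in `[0,∞]` (equal to `+∞` for `s ≤ 1`). -/
noncomputable def zetaE (s : ℝ) : ℝ≥0∞ := ∑' k : ℕ+, (((k : ℕ) : ℝ≥0∞)) ^ (-s)

open Finset

section qRec

variable (a : ℕ → ℕ)

lemma mul_qRec_le_qRec_succ : ∀ n, a (n + 1) * qRec a n ≤ qRec a (n + 1)
  | 0 => by simp [qRec]
  | _ + 1 => Nat.le_add_right _ _

variable {a}

lemma qRec_le_qRec_succ (ha : ∀ i, 1 ≤ a i) (n : ℕ) : qRec a n ≤ qRec a (n + 1) :=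
  (Nat.le_mul_of_pos_left _ (ha _)).trans (mul_qRec_le_qRec_succ a n)

lemma qRec_succ_le_two_mul (ha : ∀ i, 1 ≤ a i) : ∀ n, qRec a (n + 1) ≤ 2 * a (n + 1) * qRec a n
  | 0 => by simp [qRec]; omega
  | n + 1 => by
    have hmono := qRec_le_qRec_succ ha n
    have hstep : qRec a (n + 1) ≤ a (n + 2) * qRec a (n + 1) := Nat.le_mul_of_pos_left _ (ha _)
    change a (n + 2) * qRec a (n + 1) + qRec a n ≤ _
    linarith

lemma prod_Icc_le_qRec (n : ℕ) : ∏ i ∈ Icc 1 n, a i ≤ qRec a n := by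
  induction n with
  | zero => simp [qRec]
  | succ n ih =>
    rw [prod_Icc_succ_top (by omega), mul_comm]
    exact (Nat.mul_le_mul_left _ ih).trans (mul_qRec_le_qRec_succ a n)

lemma qRec_le_two_pow_mul_prod_Icc (ha : ∀ i, 1 ≤ a i) (n : ℕ) :
    qRec a n ≤ 2 ^ n * ∏ i ∈ Icc 1 n, a i := by
  induction n with
  | zero => simp [qRec]
  | succ n ih =>
    rw [prod_Icc_succ_top (by omega)]
    calc qRec a (n + 1) ≤ 2 * a (n + 1) * qRec a n := qRec_succ_le_two_mul ha n
      _ ≤ 2 * a (n + 1) * (2 ^ n * ∏ i ∈ Icc 1 n, a i) := Nat.mul_le_mul_left _ ih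
      _ = 2 ^ (n + 1) * ((∏ i ∈ Icc 1 n, a i) * a (n + 1)) := by ring

end qRec

section wordQ

variable {n : ℕ} (w : Fin n → ℕ+)

def wordSeq : ℕ → ℕ := fun i => if h : 1 ≤ i ∧ i ≤ n then (w ⟨i - 1, by omega⟩ : ℕ) else 1

lemma wordQ_eq_qRec_wordSeq : wordQ w = qRec (wordSeq w) n := rfl

lemma one_le_wordSeq (i : ℕ) : 1 ≤ wordSeq w i := by
  unfold wordSeq
  split_ifs
  exacts [(w _).pos, le_rfl]

lemma prod_Icc_wordSeq : ∏ i ∈ Icc 1 n, wordSeq w i = ∏ i, (w i : ℕ) := by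
  rw [← Ico_add_one_right_eq_Icc, prod_Ico_eq_prod_range, Nat.add_sub_cancel,
    ← Fin.prod_univ_eq_prod_range]
  refine prod_congr rfl fun i _ => ?_
  simp [wordSeq, add_comm 1, Nat.succ_le_of_lt i.is_lt]

lemma prod_le_wordQ : ∏ i, (w i : ℕ) ≤ wordQ w := by
  rw [wordQ_eq_qRec_wordSeq, ← prod_Icc_wordSeq]
  exact prod_Icc_le_qRec n

lemma wordQ_le_two_pow_mul_prod : wordQ w ≤ 2 ^ n * ∏ i, (w i : ℕ) := by
  rw [wordQ_eq_qRec_wordSeq, ← prod_Icc_wordSeq]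
  exact qRec_le_two_pow_mul_prod_Icc (one_le_wordSeq w) n

end wordQ

theorem ENNReal.tsum_fin_pi_prod {α : Type*} (f : α → ℝ≥0∞) :
    ∀ n, ∑' w : Fin n → α, ∏ i, f (w i) = (∑' a, f a) ^ n
  | 0 => by simp
  | n + 1 => by
    rw [← (Fin.consEquiv fun _ => α).tsum_eq]
    simp only [Fin.consEquiv_apply, Fin.prod_univ_succ, Fin.cons_zero, Fin.cons_succ,
      ENNReal.tsum_prod']
    rw [pow_succ', ← ENNReal.tsum_fin_pi_prod f n, ← ENNReal.tsum_mul_right]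
    exact tsum_congr fun _ => ENNReal.tsum_mul_left

lemma zetaE_pow (s : ℝ) (n : ℕ) :
    zetaE s ^ n = ∑' w : Fin n → ℕ+, ∏ i, ((w i : ℕ) : ℝ≥0∞) ^ (-s) :=
  (ENNReal.tsum_fin_pi_prod _ n).symm

lemma ENNReal.prod_rpow_add {ι : Type*} (s : Finset ι) {x : ι → ℝ≥0∞} (hx0 : ∀ i ∈ s, x i ≠ 0)
    (hxt : ∀ i ∈ s, x i ≠ ⊤) (y z : ℝ) :
    ∏ i ∈ s, x i ^ (y + z) = (∏ i ∈ s, x i) ^ y * ∏ i ∈ s, x i ^ z := by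
  rw [← ENNReal.prod_rpow_of_ne_top hxt, ← prod_mul_distrib]
  exact prod_congr rfl fun i hi => ENNReal.rpow_add _ _ (hx0 i hi) (hxt i hi)

section term

variable {t : ℝ} (β : ℝ) {n : ℕ} (w : Fin n → ℕ+)

lemma prod_rpow_neg_two_mul_add :
    ∏ i, ((w i : ℕ) : ℝ≥0∞) ^ (-(2 * (t + β))) =
      ((∏ i, (w i : ℕ) : ℕ) : ℝ≥0∞) ^ (-2 * t) * ∏ i, ((w i : ℕ) : ℝ≥0∞) ^ (-2 * β) := by
  rw [show -(2 * (t + β)) = -2 * t + -2 * β by ring, Nat.cast_prod]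
  exact ENNReal.prod_rpow_add _ (fun i _ => by simp) (fun i _ => natCast_ne_top _) _ _

lemma prod_rpow_le_wordQ_rpow_mul (ht : t ≤ 0) :
    ∏ i, ((w i : ℕ) : ℝ≥0∞) ^ (-(2 * (t + β))) ≤
      (wordQ w : ℝ≥0∞) ^ (-2 * t) * ∏ i, ((w i : ℕ) : ℝ≥0∞) ^ (-2 * β) := by
  rw [prod_rpow_neg_two_mul_add]
  gcongr
  · linarith
  · exact prod_le_wordQ w

lemma wordQ_rpow_mul_le (ht : t ≤ 0) :
    (wordQ w : ℝ≥0∞) ^ (-2 * t) * ∏ i, ((w i : ℕ) : ℝ≥0∞) ^ (-2 * β) ≤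
      (2 : ℝ≥0∞) ^ (-2 * (n : ℝ) * t) * ∏ i, ((w i : ℕ) : ℝ≥0∞) ^ (-(2 * (t + β))) := by
  have hs : 0 ≤ -2 * t := by linarith
  rw [prod_rpow_neg_two_mul_add, ← mul_assoc]
  gcongr
  calc (wordQ w : ℝ≥0∞) ^ (-2 * t)
      ≤ ((2 ^ n * ∏ i, (w i : ℕ) : ℕ) : ℝ≥0∞) ^ (-2 * t) := by
        gcongr; exact wordQ_le_two_pow_mul_prod w
    _ = (2 : ℝ≥0∞) ^ (-2 * (n : ℝ) * t) * ((∏ i, (w i : ℕ) : ℕ) : ℝ≥0∞) ^ (-2 * t) := by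
        rw [Nat.cast_mul, ENNReal.mul_rpow_of_nonneg _ _ hs, Nat.cast_pow, Nat.cast_ofNat,
          ← ENNReal.rpow_natCast, ← ENNReal.rpow_mul]
        ring_nf

end term

theorem partition_function_zeta_bounds_general (t β : ℝ) (ht : t ≤ 0) (n : ℕ) :
    zetaE (2 * (t + β)) ^ n ≤ Zpart t β n ∧
      Zpart t β n ≤ (2 : ℝ≥0∞) ^ (-2 * (n : ℝ) * t) * zetaE (2 * (t + β)) ^ n := by
  rw [zetaE_pow, ← ENNReal.tsum_mul_left]
  exact ⟨ENNReal.tsum_le_tsum fun w => prod_rpow_le_wordQ_rpow_mul β w ht,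
    ENNReal.tsum_le_tsum fun w => wordQ_rpow_mul_le β w ht⟩

/-- For `t ≤ 0` and `n ≥ 1`:
`ζ(2(t+β))ⁿ ≤ ∑_{ω∈ℕⁿ} q_n(ω)^{−2t} ∏ ω_i^{−2β} ≤ 2^{−2nt} ζ(2(t+β))ⁿ`. -/
theorem partition_function_zeta_bounds (t β : ℝ) (ht : t ≤ 0) (n : ℕ) (hn : 1 ≤ n) :
    zetaE (2 * (t + β)) ^ n ≤ Zpart t β n ∧
      Zpart t β n ≤ (2 : ℝ≥0∞) ^ (-2 * (n : ℝ) * t) * zetaE (2 * (t + β)) ^ n :=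
  partition_function_zeta_bounds_general t β ht n
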